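/- The group ⟨a, b | aᵖ = b^q⟩ with p, q coprime integers, p, q ≥ 2, is not bi-orderable. -/

import Mathlib

def BiOrderable (G : Type*) [Group G] : Prop :=
  ∃ r : G → G → Prop, IsStrictTotalOrder G r ∧
    (∀ f g h : G, r g h → r (f * g) (f * h)) ∧
    (∀ f g h : G, r g h → r (g * f) (h * f))

/-!
In a bi-ordered group `u < v` implies `uⁿ < vⁿ`, so `n`-th roots are unique. If `x` commutes
with `hⁿ`, then `x h x⁻¹` and `h` have the same `n`-th power and hence coincide. In the torus knot
group `a` commutes with `b^q = aᵖ`, so bi-orderability would make `a` and `b` commute; they do not,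
as the action `a (x, y) = (x + 1, y)`, `b (x, y) = (x, y + [x = 0])` on `ZMod p × ZMod q` shows.
-/

theorem BiOrderable.isMulTorsionFree {G : Type*} [Group G] (hG : BiOrderable G) :
    IsMulTorsionFree G := by
  classical
  obtain ⟨r, hr, hleft, hright⟩ := hG
  let := linearOrderOfSTO r
  have : MulLeftStrictMono G := ⟨fun f _ _ h => hleft f _ _ h⟩
  have : MulRightStrictMono G := ⟨fun f _ _ h => hright f _ _ h⟩
  infer_instance

theorem Commute.of_pow_right {G : Type*} [Group G] [IsMulTorsionFree G] {x h : G} {n : ℕ}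
    (hc : Commute x (h ^ n)) (hn : n ≠ 0) : Commute x h := by
  have hconj : (x * h * x⁻¹) ^ n = h ^ n := by rw [conj_pow, hc.eq, mul_inv_cancel_right]
  rw [commute_iff_eq, ← mul_inv_eq_iff_eq_mul]
  exact pow_left_injective hn hconj

abbrev TorusKnotGroup (p q : ℕ) : Type :=
  PresentedGroup ({FreeGroup.of true ^ p * (FreeGroup.of false ^ q)⁻¹} : Set (FreeGroup Bool))

namespace TorusKnotGroup

variable {p q : ℕ}

def a : TorusKnotGroup p q := PresentedGroup.of true

def b : TorusKnotGroup p q := PresentedGroup.of false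

theorem a_pow_eq_b_pow : (a : TorusKnotGroup p q) ^ p = b ^ q := by
  rw [← mul_inv_eq_one]
  exact PresentedGroup.one_of_mem (Set.mem_singleton _)

theorem commute_a_b_pow : Commute (a : TorusKnotGroup p q) (b ^ q) :=
  a_pow_eq_b_pow ▸ Commute.self_pow a p

def lift {G : Type*} [Group G] (x y : G) (h : x ^ p = y ^ q) : TorusKnotGroup p q →* G :=
  PresentedGroup.toGroup (f := fun t => if t then x else y) <| by
    rintro _ rfl
    simp [h]

section lift

variable {G : Type*} [Group G] {x y : G} (h : x ^ p = y ^ q)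

@[simp]
theorem lift_a : lift x y h a = x := PresentedGroup.toGroup.of _

@[simp]
theorem lift_b : lift x y h b = y := PresentedGroup.toGroup.of _

end lift

variable (p q)

def shiftFst : Equiv.Perm (ZMod p × ZMod q) :=
  (Equiv.addRight 1).prodCongr (Equiv.refl _)

def shiftSndOverZero : Equiv.Perm (ZMod p × ZMod q) :=
  Equiv.Perm.prodExtendRight 0 (Equiv.addRight 1)

variable {p q}

theorem shiftFst_pow_apply (n : ℕ) (z : ZMod p × ZMod q) :
    (shiftFst p q ^ n) z = (z.1 + n, z.2) := by
  induction n with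
  | zero => simp
  | succ n ih =>
    rw [pow_succ', Equiv.Perm.mul_apply, ih]
    simp [shiftFst, add_assoc]

theorem shiftSndOverZero_pow_apply (n : ℕ) (z : ZMod p × ZMod q) :
    (shiftSndOverZero p q ^ n) z = (z.1, z.2 + if z.1 = 0 then (n : ZMod q) else 0) := by
  induction n with
  | zero => simp
  | succ n ih =>
    rw [pow_succ', Equiv.Perm.mul_apply, ih]
    by_cases hz : z.1 = 0
    · simp [shiftSndOverZero, hz, Equiv.Perm.prodExtendRight, add_assoc]
    · simp [shiftSndOverZero, hz, Equiv.Perm.prodExtendRight]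

theorem shiftFst_pow_self : shiftFst p q ^ p = 1 :=
  Equiv.ext fun z => by simp [shiftFst_pow_apply]

theorem shiftSndOverZero_pow_self : shiftSndOverZero p q ^ q = 1 :=
  Equiv.ext fun z => by simp [shiftSndOverZero_pow_apply]

theorem not_commute_shiftFst_shiftSndOverZero [Nontrivial (ZMod p)] [Nontrivial (ZMod q)] :
    ¬ Commute (shiftFst p q) (shiftSndOverZero p q) := by
  intro h
  have h00 := congrArg (fun σ => (σ (0, 0)).2) h.eq
  simp [shiftFst, shiftSndOverZero, Equiv.Perm.prodExtendRight_apply_eq,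
    Equiv.Perm.prodExtendRight_apply_ne] at h00

theorem not_commute_a_b (hp : p ≠ 1) (hq : q ≠ 1) : ¬ Commute (a : TorusKnotGroup p q) b := by
  have := ZMod.nontrivial_iff.mpr hp
  have := ZMod.nontrivial_iff.mpr hq
  intro h
  apply not_commute_shiftFst_shiftSndOverZero (p := p) (q := q)
  simpa using h.map (lift _ _ (shiftFst_pow_self.trans shiftSndOverZero_pow_self.symm))

end TorusKnotGroup

theorem torus_knot_group_not_biorderable_general (p q : ℕ) (hp : 2 ≤ p) (hq : 2 ≤ q) :
    ¬ BiOrderable (PresentedGroup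
      ({FreeGroup.of true ^ p * (FreeGroup.of false ^ q)⁻¹} : Set (FreeGroup Bool))) := by
  intro hG
  have := hG.isMulTorsionFree
  exact TorusKnotGroup.not_commute_a_b (p := p) (q := q) (by omega) (by omega)
    (TorusKnotGroup.commute_a_b_pow.of_pow_right (by omega))

/-- The torus knot group `⟨a, b | aᵖ = b^q⟩` with `p, q ≥ 2` coprime is not
bi-orderable.  Here `a = of true`, `b = of false`. -/
theorem torus_knot_group_not_biorderable (p q : ℕ) (hp : 2 ≤ p) (hq : 2 ≤ q)
    (hpq : Nat.Coprime p q) :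
    ¬ BiOrderable (PresentedGroup
      ({FreeGroup.of true ^ p * (FreeGroup.of false ^ q)⁻¹} : Set (FreeGroup Bool))) :=
  torus_knot_group_not_biorderable_general p q hp hq
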